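/- Let λ be an integer partition, viewed as a finite order ideal of ℕ² (Young's lattice is J(ℕ²)). Then λ is an Eeta win in Young's lattice if and only if the lattice path path(λ) tracing the southeast boundary of the Young diagram of λ does not contain an odd-length maximal block of east steps immediately followed by an odd-length maximal block of north steps. -/

import Mathlib

variable {L : Type*} [PartialOrder L]

/-- `ung x` is the set `{⋀({x} ∪ T) : T ⊆ cov x}` of results of Ungar moves applied to `x`. -/
def ung (x : L) : Set L :=
  {y | ∃ T : Set L, (∀ t ∈ T, t ⋖ x) ∧ IsGLB (insert x T) y}

lemma ung_le {x y : L} (h : y ∈ ung x) : y ≤ x := by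
  obtain ⟨T, -, hglb⟩ := h
  exact hglb.1 (Set.mem_insert x T)

attribute [local instance] WellFoundedLT.toWellFoundedRelation

mutual
  /-- `x` is an Atniss win: some element of `ung x \ {x}` is an Eeta win. -/
  def atnissWin [WellFoundedLT L] (x : L) : Prop :=
    ∃ y, ∃ _ : y ∈ ung x ∧ y ≠ x, eetaWin y
  termination_by x
  decreasing_by rename_i h; exact lt_of_le_of_ne (ung_le h.1) h.2

  /-- `x` is an Eeta win: every element of `ung x \ {x}` is an Atniss win. -/
  def eetaWin [WellFoundedLT L] (x : L) : Prop :=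
    ∀ y, (y ∈ ung x ∧ y ≠ x) → atnissWin y
  termination_by x
  decreasing_by rename_i h; exact lt_of_le_of_ne (ung_le h.1) h.2
end

/-- The lattice `J(P)` of finite order ideals of a poset `P`, ordered by inclusion. -/
abbrev FinIdeal (P : Type*) [PartialOrder P] : Type _ :=
  {I : Finset P // ∀ ⦃x⦄, x ∈ I → ∀ ⦃y⦄, y ≤ x → y ∈ I}

/-- The set of maximal elements of a finite subset of a poset. -/
def maxSet {P : Type*} [PartialOrder P] (s : Finset P) : Set P :=
  {x | x ∈ s ∧ ∀ y ∈ s, x ≤ y → x = y}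

/-- The length of the `i`-th row (0-indexed) of a partition, viewed as a finite order
ideal of `ℕ × ℕ`. -/
def rowLen (I : FinIdeal (ℕ × ℕ)) (i : ℕ) : ℕ :=
  (I.val.filter fun p => p.1 = i).card

namespace UngarSeq

/-- antitone step condition -/
def Ant (r : ℕ → ℕ) : Prop := ∀ i, r (i+1) ≤ r i

/-- the "bad pattern" predicate, matching the theorem statement -/
def Bad (r : ℕ → ℕ) : Prop :=
  ∃ i j : ℕ, i ≤ j ∧ r i = r j ∧ r (j + 1) < r j ∧
    (i = 0 ∨ r i < r (i - 1)) ∧ Odd (j - i + 1) ∧ Odd (r j - r (j + 1))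

/-- `r'` is obtained from `r` by an Ungar move (possibly trivial) -/
def Valid (r r' : ℕ → ℕ) : Prop :=
  ∀ i, r' i = r i ∨ (r' i + 1 = r i ∧ r (i + 1) < r i)

lemma ant_mono {r : ℕ → ℕ} (h : Ant r) {i j : ℕ} (hij : i ≤ j) : r j ≤ r i := by
  induction j with
  | zero => simp_all
  | succ k ih =>
    rcases Nat.lt_or_ge i (k+1) with h' | h'
    · exact le_trans (h k) (ih (by omega))
    · have : i = k + 1 := by omega
      simp [this]

lemma valid_le {r r' : ℕ → ℕ} (h : Valid r r') (i : ℕ) : r' i ≤ r i := by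
  rcases h i with h' | ⟨h', _⟩ <;> omega

lemma valid_ant {r r' : ℕ → ℕ} (ha : Ant r) (h : Valid r r') : Ant r' := by
  intro i
  rcases h i with h' | ⟨h', hc⟩
  · exact le_trans (valid_le h (i+1)) (h' ▸ ha i)
  · have := valid_le h (i+1)
    have := ha i
    omega

lemma valid_refl (r : ℕ → ℕ) : Valid r r := fun _ => Or.inl rfl

/-- `c` rows of value `p` followed by `t` -/
def cat (c p : ℕ) (t : ℕ → ℕ) : ℕ → ℕ := fun i => if i < c then p else t (i - c)

lemma cat_lt {c p : ℕ} {t : ℕ → ℕ} {i : ℕ} (h : i < c) : cat c p t i = p := by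
  simp [cat, h]

lemma cat_ge {c p : ℕ} {t : ℕ → ℕ} {i : ℕ} (h : c ≤ i) : cat c p t i = t (i - c) := by
  simp [cat, Nat.not_lt.2 h]

lemma cat_zero (p : ℕ) (t : ℕ → ℕ) : cat 0 p t = t := by
  funext i; simp [cat]

lemma cat_succ (c p : ℕ) (t : ℕ → ℕ) : cat 1 p (cat c p t) = cat (c+1) p t := by
  funext i
  rcases Nat.eq_zero_or_pos i with rfl | hi
  · rw [cat_lt (by omega), cat_lt (by omega)]
  · rw [cat_ge (by omega : 1 ≤ i)]
    rcases Nat.lt_or_ge i (c+1) with h | h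
    · rw [cat_lt (by omega), cat_lt (by omega)]
    · rw [cat_ge (by omega : c ≤ i - 1), cat_ge (by omega : c + 1 ≤ i)]
      congr 1; omega

lemma ant_cat {c p : ℕ} {t : ℕ → ℕ} (ht : Ant t) (h0 : t 0 ≤ p) : Ant (cat c p t) := by
  intro i
  rcases Nat.lt_or_ge (i+1) c with h | h
  · rw [cat_lt h, cat_lt (by omega)]
  · rw [cat_ge h]
    rcases Nat.lt_or_ge i c with h' | h'
    · have : i + 1 - c = 0 := by omega
      rw [this, cat_lt h']; exact h0
    · rw [cat_ge h']
      have : i + 1 - c = (i - c) + 1 := by omega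
      rw [this]; exact ht _

lemma bad_cat_of_bad {c p : ℕ} {t : ℕ → ℕ} (hp : t 0 < p) (hb : Bad t) :
    Bad (cat c p t) := by
  obtain ⟨i, j, hij, he, hlt, hmax, ho1, ho2⟩ := hb
  refine ⟨i + c, j + c, by omega, ?_, ?_, ?_, ?_, ?_⟩
  · rw [cat_ge (by omega), cat_ge (by omega)]
    simpa using he
  · rw [cat_ge (by omega), cat_ge (by omega)]
    have h1 : j + c + 1 - c = j + 1 := by omega
    have h2 : j + c - c = j := by omega
    rw [h1, h2]; exact hlt
  · rcases hmax with rfl | hm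
    · rcases Nat.eq_zero_or_pos c with rfl | hc
      · left; rfl
      · right
        rw [cat_ge (by omega), cat_lt (by omega)]
        simpa using hp
    · rcases Nat.eq_zero_or_pos i with rfl | hi
      · exact absurd hm (by simp)
      · right
        rw [cat_ge (by omega), cat_ge (by omega : c ≤ i + c - 1)]
        have h1 : i + c - c = i := by omega
        have h2 : i + c - 1 - c = i - 1 := by omega
        rw [h1, h2]
        exact hm
  · have : j + c - (i + c) = j - i := by omega
    rw [this]; exact ho1
  · rw [cat_ge (by omega), cat_ge (by omega)]
    have h1 : j + c + 1 - c = j + 1 := by omega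
    have h2 : j + c - c = j := by omega
    rw [h1, h2]; exact ho2

lemma bad_cat_top {c p : ℕ} {t : ℕ → ℕ} (hc : 1 ≤ c) (hp : t 0 < p)
    (h1 : Odd c) (h2 : Odd (p - t 0)) : Bad (cat c p t) := by
  refine ⟨0, c - 1, by omega, ?_, ?_, Or.inl rfl, ?_, ?_⟩
  · rw [cat_lt (by omega), cat_lt (by omega)]
  · rw [(by omega : c - 1 + 1 = c), cat_ge le_rfl, cat_lt (by omega)]
    simpa using hp
  · simpa [Nat.sub_add_cancel hc] using h1
  · rw [cat_lt (by omega), (by omega : c - 1 + 1 = c), cat_ge le_rfl]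
    simpa using h2

lemma bad_of_bad_cat {c p : ℕ} {t : ℕ → ℕ} (ht : Ant t) (hc : 1 ≤ c) (hp : t 0 < p)
    (hb : Bad (cat c p t)) : (Odd c ∧ Odd (p - t 0)) ∨ Bad t := by
  obtain ⟨i, j, hij, he, hlt, hmax, ho1, ho2⟩ := hb
  rcases Nat.lt_or_ge j c with hjc | hjc
  · -- j < c, so j = c - 1, i = 0
    rw [cat_lt hjc] at hlt he ho2
    have hj : j = c - 1 := by
      by_contra h
      have : j + 1 < c := by omega
      rw [cat_lt this] at hlt; omega
    have hi0 : i = 0 := by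
      rcases hmax with h | h
      · exact h
      · exfalso
        rw [cat_lt (by omega), cat_lt (by omega)] at h; omega
    left
    subst hj hi0
    rw [(by omega : c - 1 + 1 = c), cat_ge le_rfl] at hlt ho2
    simp only [Nat.sub_self] at hlt ho2
    constructor
    · simpa [Nat.sub_add_cancel hc] using ho1
    · exact ho2
  · -- j ≥ c
    have hic : c ≤ i := by
      by_contra h
      rw [cat_lt (by omega), cat_ge hjc] at he
      have := ant_mono ht (Nat.zero_le (j - c))
      omega
    right
    refine ⟨i - c, j - c, by omega, ?_, ?_, ?_, ?_, ?_⟩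
    · rw [cat_ge hic, cat_ge hjc] at he; exact he
    · rw [cat_ge (by omega : c ≤ j + 1), cat_ge hjc] at hlt
      have : j + 1 - c = j - c + 1 := by omega
      rw [this] at hlt; exact hlt
    · rcases Nat.eq_or_lt_of_le hic with h | h
      · left; omega
      · right
        rcases hmax with h0 | hm
        · omega
        · rw [cat_ge hic, cat_ge (by omega : c ≤ i - 1)] at hm
          have : i - 1 - c = i - c - 1 := by omega
          rw [this] at hm; exact hm
    · have : j - c - (i - c) = j - i := by omega
      rw [this]; exact ho1
    · rw [cat_ge (by omega : c ≤ j + 1), cat_ge hjc] at ho2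
      have : j + 1 - c = j - c + 1 := by omega
      rw [this] at ho2; exact ho2

lemma not_bad_cat {c p : ℕ} {t : ℕ → ℕ} (ht : Ant t) (hc : 1 ≤ c) (hp : t 0 < p)
    (h1 : ¬(Odd c ∧ Odd (p - t 0))) (h2 : ¬ Bad t) : ¬ Bad (cat c p t) := by
  intro hb
  rcases bad_of_bad_cat ht hc hp hb with h | h
  · exact h1 h
  · exact h2 h


lemma all_moves_bad {n : ℕ} {r r' : ℕ → ℕ} (ha : Ant r) (hb : ∀ i, n ≤ i → r i = 0)
    (hg : ¬ Bad r) (hv : Valid r r') (hne : r' ≠ r) : Bad r' := by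
  have hex : ∃ i, r' i ≠ r i := Function.ne_iff.mp hne
  classical
  set i0 := Nat.find hex with hi0def
  have hspec : r' i0 ≠ r i0 := Nat.find_spec hex
  have hlt : ∀ l < i0, r' l = r l := by
    intro l hl
    by_contra h
    have h2 : Nat.find hex ≤ l := Nat.find_le h
    omega
  have hdec : r' i0 + 1 = r i0 ∧ r (i0 + 1) < r i0 := by
    rcases hv i0 with h | h
    · exact absurd h hspec
    · exact h
  -- run start
  have hex2 : ∃ l, r l = r i0 := ⟨i0, rfl⟩
  set s := Nat.find hex2 with hsdef
  have hss : r s = r i0 := Nat.find_spec hex2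
  have hsle : s ≤ i0 := Nat.find_le rfl
  have hrun : ∀ l, s ≤ l → l ≤ i0 → r l = r i0 := by
    intro l h1 h2
    have := ant_mono ha h1
    have := ant_mono ha h2
    omega
  have hmax : s = 0 ∨ r s < r (s - 1) := by
    rcases Nat.eq_zero_or_pos s with h | h
    · exact Or.inl h
    · right
      have h1 : r (s-1) ≠ r i0 := Nat.find_min hex2 (by omega)
      have h2 : r i0 ≤ r (s-1) := ant_mono ha (by omega)
      omega
  rcases Nat.even_or_odd (i0 - s + 1) with hpar | hpar
  · -- even run: witness (s, i0 - 1)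
    have hsi : s < i0 := by
      rcases Nat.eq_or_lt_of_le hsle with h | h
      · exfalso
        rw [h, Nat.sub_self, Nat.even_iff] at hpar
        omega
      · exact h
    refine ⟨s, i0 - 1, by omega, ?_, ?_, ?_, ?_, ?_⟩
    · rw [hlt s hsi, hlt (i0-1) (by omega), hss, hrun (i0-1) (by omega) (by omega)]
    · rw [(by omega : i0 - 1 + 1 = i0), hlt (i0-1) (by omega), hrun (i0-1) (by omega) (by omega)]
      omega
    · rcases hmax with h | h
      · exact Or.inl h
      · right
        rw [hlt s hsi, hlt (s-1) (by omega)]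
        exact h
    · rw [Nat.odd_iff]
      rw [Nat.even_iff] at hpar
      omega
    · rw [(by omega : i0 - 1 + 1 = i0), hlt (i0-1) (by omega), hrun (i0-1) (by omega) (by omega)]
      rw [Nat.odd_iff]
      omega
  · -- odd run: find j0
    have hfin : ∃ k, r' (i0 + k + 1) = r (i0 + k + 1) := by
      refine ⟨n, ?_⟩
      have h1 := hb (i0 + n + 1) (by omega)
      have h2 := valid_le hv (i0 + n + 1)
      omega
    set k0 := Nat.find hfin with hk0def
    set j0 := i0 + k0 with hj0def
    have hj1 : r' (j0 + 1) = r (j0 + 1) := Nat.find_spec hfin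
    have hdecs : ∀ l, i0 ≤ l → l ≤ j0 → r' l + 1 = r l ∧ r (l + 1) < r l := by
      intro l h1 h2
      have hne' : r' l ≠ r l := by
        rcases Nat.eq_or_lt_of_le h1 with h | h
        · rw [← h]; exact hspec
        · have hmin := Nat.find_min hfin (m := l - i0 - 1) (by omega)
          have : i0 + (l - i0 - 1) + 1 = l := by omega
          rw [this] at hmin
          exact hmin
      rcases hv l with h | h
      · exact absurd h hne'
      · exact h
    have hstep : ∀ l, i0 < l → l ≤ j0 → r l < r (l - 1) := by
      intro l h1 h2
      have := (hdecs (l-1) (by omega) (by omega)).2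
      rw [(by omega : l - 1 + 1 = l)] at this
      exact this
    have heven : Even (r j0 - r (j0 + 1)) := by
      by_contra hodd
      rw [Nat.not_even_iff_odd] at hodd
      rcases Nat.eq_zero_or_pos k0 with hk | hk
      · -- j0 = i0 : use pattern (s, i0)
        have hj0 : j0 = i0 := by omega
        exact hg ⟨s, i0, hsle, hss, hdec.2, hmax, hpar, by rw [hj0] at hodd; exact hodd⟩
      · -- j0 > i0 : use pattern (j0, j0)
        have h1 : r j0 < r (j0 - 1) := hstep j0 (by omega) le_rfl
        exact hg ⟨j0, j0, le_rfl, rfl, (hdecs j0 (by omega) le_rfl).2, Or.inr h1,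
          by simpa using odd_one, hodd⟩
    have hcor := (hdecs j0 (by omega) le_rfl)
    have hd2 : r j0 - r (j0 + 1) ≥ 2 := by
      rw [Nat.even_iff] at heven
      omega
    refine ⟨j0, j0, le_rfl, rfl, ?_, ?_, by simpa using odd_one, ?_⟩
    · rw [hj1]; omega
    · rcases Nat.eq_zero_or_pos j0 with h | h
      · exact Or.inl h
      · right
        rcases Nat.eq_zero_or_pos k0 with hk | hk
        · have : j0 - 1 < i0 := by omega
          rw [hlt (j0-1) this]
          have := ant_mono ha (by omega : j0 - 1 ≤ j0 - 1)
          have h2 : r j0 ≤ r (j0 - 1) := ant_mono ha (by omega)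
          omega
        · have h1 := (hdecs (j0-1) (by omega) (by omega)).1
          have h2 := hstep j0 (by omega) le_rfl
          omega
    · rw [hj1, Nat.odd_iff]
      rw [Nat.even_iff] at heven
      omega


lemma valid_s0 {r t : ℕ → ℕ} {a v : ℕ} (hrows : ∀ i < a, r i = v)
    (ht : ∀ j, t j = r (j + a) ∨ (t j + 1 = r (j + a) ∧ r (j + 1 + a) < r (j + a))) :
    Valid r (cat a v t) := by
  intro i
  rcases Nat.lt_or_ge i a with h | h
  · left; rw [cat_lt h, hrows i h]
  · rw [cat_ge h]
    have e1 : i - a + a = i := by omega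
    have e2 : i - a + 1 + a = i + 1 := by omega
    rcases ht (i - a) with h1 | ⟨h1, h2⟩
    · left; rw [h1, e1]
    · right
      rw [e1] at h1
      rw [e1, e2] at h2
      exact ⟨h1, h2⟩

lemma valid_s1 {r t : ℕ → ℕ} {a v : ℕ} (ha : 1 ≤ a) (hrows : ∀ i < a, r i = v)
    (hw : r a < v)
    (ht : ∀ j, t j = r (j + a) ∨ (t j + 1 = r (j + a) ∧ r (j + 1 + a) < r (j + a))) :
    Valid r (cat (a-1) v (cat 1 (v-1) t)) := by
  intro i
  rcases Nat.lt_or_ge i (a-1) with h | h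
  · left; rw [cat_lt h, hrows i (by omega)]
  · rw [cat_ge h]
    rcases Nat.eq_or_lt_of_le h with h' | h'
    · -- i = a - 1
      rw [← h', Nat.sub_self, cat_lt (by omega : (0:ℕ) < 1)]
      right
      constructor
      · rw [hrows (a-1) (by omega)]; omega
      · rw [(by omega : a - 1 + 1 = a), hrows (a-1) (by omega)]; exact hw
    · -- i ≥ a
      rw [cat_ge (by omega : 1 ≤ i - (a-1))]
      have e0 : i - (a-1) - 1 = i - a := by omega
      have e1 : i - a + a = i := by omega
      have e2 : i - a + 1 + a = i + 1 := by omega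
      rw [e0]
      rcases ht (i - a) with h1 | ⟨h1, h2⟩
      · left; rw [h1, e1]
      · right
        rw [e1] at h1
        rw [e1, e2] at h2
        exact ⟨h1, h2⟩

lemma exists_nobad : ∀ n : ℕ, ∀ r : ℕ → ℕ, Ant r → (∀ i, n ≤ i → r i = 0) →
    (∃ r', Valid r r' ∧ ¬ Bad r') ∧
    (∃ r', Valid r r' ∧ r' 0 = r 0 ∧ ¬ Bad (cat 1 (r 0) r')) := by
  intro n
  induction n using Nat.strong_induction_on with
  | _ n IH =>
  intro r har hbr
  by_cases h0 : r 0 = 0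
  · have hz : ∀ i, r i = 0 := fun i => by have := ant_mono har (Nat.zero_le i); omega
    have hnb : ¬ Bad r := by
      rintro ⟨i, j, -, -, hlt, -⟩
      rw [hz j, hz (j+1)] at hlt; omega
    refine ⟨⟨r, valid_refl r, hnb⟩, ⟨r, valid_refl r, rfl, ?_⟩⟩
    rintro ⟨i, j, -, -, hlt, -⟩
    have hc : ∀ i, cat 1 (r 0) r i = 0 := by
      intro i
      rcases Nat.lt_or_ge i 1 with h | h
      · rw [cat_lt h, h0]
      · rw [cat_ge h]; exact hz _
    rw [hc j, hc (j+1)] at hlt; omega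
  · have hv0 : 0 < r 0 := Nat.pos_of_ne_zero h0
    have hex : ∃ i, r i < r 0 := ⟨n, by rw [hbr n le_rfl]; omega⟩
    classical
    set a := Nat.find hex with hadef
    have hw0 : r a < r 0 := Nat.find_spec hex
    have ha1 : 1 ≤ a := by
      rcases Nat.eq_zero_or_pos a with h | h
      · rw [h] at hw0; omega
      · exact h
    have hrows : ∀ i < a, r i = r 0 := fun i hi => by
      have h1 : ¬ r i < r 0 := Nat.find_min hex hi
      have h2 := ant_mono har (Nat.zero_le i)
      omega
    have han : a ≤ n := Nat.find_le (by rw [hbr n le_rfl]; omega)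
    have hn1 : 1 ≤ n := le_trans ha1 han
    set v := r 0 with hvdef
    have hw : r a < v := hw0
    have hash : Ant (fun j => r (j + a)) := by
      intro j
      show r (j + 1 + a) ≤ r (j + a)
      have h := har (j + a)
      have e : j + 1 + a = j + a + 1 := by omega
      rw [e]; exact h
    have hbsh : ∀ i, n - a ≤ i → (fun j => r (j + a)) i = 0 := by
      intro i hi
      show r (i + a) = 0
      exact hbr _ (by omega)
    obtain ⟨⟨t, htv, htb⟩, ⟨t2, h2v, h20, h2b⟩⟩ := IH (n - a) (by omega) _ hash hbsh
    have ht' : ∀ j, t j = r (j + a) ∨ (t j + 1 = r (j + a) ∧ r (j + 1 + a) < r (j + a)) :=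
      fun j => htv j
    have ht2' : ∀ j, t2 j = r (j + a) ∨ (t2 j + 1 = r (j + a) ∧ r (j + 1 + a) < r (j + a)) :=
      fun j => h2v j
    have hta : Ant t := valid_ant hash htv
    have ht2a : Ant t2 := valid_ant hash h2v
    have ht0 : t 0 ≤ r a := by have h := valid_le htv 0; simpa using h
    have ht0v : t 0 < v := lt_of_le_of_lt ht0 hw
    have ht20 : t2 0 = r a := by simpa using h20
    have h2b' : ¬ Bad (cat 1 (r a) t2) := by simpa using h2b
    constructor
    · -- claim A
      by_cases hA : Odd a ∧ Odd (v - t 0)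
      · rcases Nat.lt_or_ge (v - t 0) 2 with hd1 | hd2
        · -- v - t 0 = 1 : merge construction using t2
          have hre : r a = v - 1 := by omega
          have hinner : ¬ Bad (cat 1 (v-1) t2) := by rw [← hre]; exact h2b'
          refine ⟨cat (a-1) v (cat 1 (v-1) t2), valid_s1 ha1 hrows hw ht2', ?_⟩
          rcases Nat.eq_or_lt_of_le ha1 with h1 | h1
          · rw [(by omega : a - 1 = 0), cat_zero]; exact hinner
          · apply not_bad_cat (ant_cat ht2a (by omega)) (by omega)
              (by rw [cat_lt (by omega : (0:ℕ) < 1)]; omega) ?_ hinner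
            rintro ⟨ho, -⟩
            have hoa := hA.1
            rw [Nat.odd_iff] at ho hoa
            omega
        · -- v - t 0 ≥ 2 : no merge, use t
          have hinner : ¬ Bad (cat 1 (v-1) t) := by
            apply not_bad_cat hta le_rfl (by omega : t 0 < v - 1) ?_ htb
            rintro ⟨-, ho⟩
            have hod := hA.2
            rw [Nat.odd_iff] at ho hod
            omega
          refine ⟨cat (a-1) v (cat 1 (v-1) t), valid_s1 ha1 hrows hw ht', ?_⟩
          rcases Nat.eq_or_lt_of_le ha1 with h1 | h1
          · rw [(by omega : a - 1 = 0), cat_zero]; exact hinner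
          · apply not_bad_cat (ant_cat hta (by omega)) (by omega)
              (by rw [cat_lt (by omega : (0:ℕ) < 1)]; omega) ?_ hinner
            rintro ⟨ho, -⟩
            have hoa := hA.1
            rw [Nat.odd_iff] at ho hoa
            omega
      · -- s = 0
        exact ⟨cat a v t, valid_s0 hrows ht', not_bad_cat hta ha1 ht0v hA htb⟩
    · -- claim B
      by_cases hOa : Odd a
      · refine ⟨cat a v t, valid_s0 hrows ht', by rw [cat_lt (by omega)], ?_⟩
        rw [cat_succ]
        apply not_bad_cat hta (by omega) ht0v ?_ htb
        rintro ⟨ho, -⟩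
        rw [Nat.odd_iff] at ho hOa
        omega
      · have haE : a % 2 = 0 := by rw [Nat.odd_iff] at hOa; omega
        have ha2 : 2 ≤ a := by omega
        by_cases hOd : Odd (v - t 0)
        · rcases Nat.lt_or_ge (v - t 0) 2 with hd1 | hd2
          · -- merge with t2
            have hre : r a = v - 1 := by omega
            have hinner : ¬ Bad (cat 1 (v-1) t2) := by rw [← hre]; exact h2b'
            refine ⟨cat (a-1) v (cat 1 (v-1) t2), valid_s1 ha1 hrows hw ht2',
              by rw [cat_lt (by omega)], ?_⟩
            rw [cat_succ, (by omega : a - 1 + 1 = a)]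
            apply not_bad_cat (ant_cat ht2a (by omega)) (by omega)
              (by rw [cat_lt (by omega : (0:ℕ) < 1)]; omega) ?_ hinner
            rintro ⟨ho, -⟩
            rw [Nat.odd_iff] at ho
            omega
          · -- no merge with t
            have hinner : ¬ Bad (cat 1 (v-1) t) := by
              apply not_bad_cat hta le_rfl (by omega : t 0 < v - 1) ?_ htb
              rintro ⟨-, ho⟩
              rw [Nat.odd_iff] at ho hOd
              omega
            refine ⟨cat (a-1) v (cat 1 (v-1) t), valid_s1 ha1 hrows hw ht',
              by rw [cat_lt (by omega)], ?_⟩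
            rw [cat_succ, (by omega : a - 1 + 1 = a)]
            apply not_bad_cat (ant_cat hta (by omega)) (by omega)
              (by rw [cat_lt (by omega : (0:ℕ) < 1)]; omega) ?_ hinner
            rintro ⟨ho, -⟩
            rw [Nat.odd_iff] at ho
            omega
        · -- Even (v - t 0) : s = 0
          refine ⟨cat a v t, valid_s0 hrows ht', by rw [cat_lt (by omega)], ?_⟩
          rw [cat_succ]
          apply not_bad_cat hta (by omega) ht0v ?_ htb
          rintro ⟨-, ho⟩
          exact hOd ho

end UngarSeq

section Bridge

open Finset UngarSeq

lemma mem_iff (I : FinIdeal (ℕ × ℕ)) (i j : ℕ) : (i, j) ∈ I.1 ↔ j < rowLen I i := by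
  classical
  constructor
  · intro h
    have hsub : (Finset.range (j+1)).image (fun k => ((i, k) : ℕ × ℕ)) ⊆
        I.1.filter (fun p => p.1 = i) := by
      intro p hp
      simp only [Finset.mem_image, Finset.mem_range] at hp
      obtain ⟨k, hk, rfl⟩ := hp
      refine Finset.mem_filter.2 ⟨I.2 h ?_, rfl⟩
      exact Prod.mk_le_mk.2 ⟨le_rfl, by omega⟩
    have hcard := Finset.card_le_card hsub
    rw [Finset.card_image_of_injective _ (fun x y hxy => by simpa using hxy),
      Finset.card_range] at hcard
    unfold rowLen
    omega
  · intro h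
    by_contra hmem
    have hsub : I.1.filter (fun p => p.1 = i) ⊆
        (Finset.range j).image (fun k => ((i, k) : ℕ × ℕ)) := by
      rintro ⟨a, b⟩ hp
      rw [Finset.mem_filter] at hp
      obtain ⟨haI, rfl⟩ := hp
      simp only [Finset.mem_image, Finset.mem_range]
      refine ⟨b, ?_, rfl⟩
      by_contra hb
      exact hmem (I.2 haI (Prod.mk_le_mk.2 ⟨le_rfl, by omega⟩))
    have hcard := Finset.card_le_card hsub
    rw [Finset.card_image_of_injective _ (fun x y hxy => by simpa using hxy),
      Finset.card_range] at hcard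
    unfold rowLen at h
    omega

lemma rowLen_eq_of {J : FinIdeal (ℕ × ℕ)} {i m : ℕ} (h : ∀ j, ((i, j) ∈ J.1 ↔ j < m)) :
    rowLen J i = m := by
  classical
  have he : J.1.filter (fun p => p.1 = i) = (Finset.range m).image (fun j => ((i, j) : ℕ × ℕ)) := by
    ext ⟨a, b⟩
    simp only [Finset.mem_filter, Finset.mem_image, Finset.mem_range]
    constructor
    · rintro ⟨hm, rfl⟩
      exact ⟨b, (h b).1 hm, rfl⟩
    · rintro ⟨k, hk, hke⟩
      obtain ⟨rfl, rfl⟩ : i = a ∧ k = b := by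
        constructor <;> · have := congrArg Prod.fst hke; have := congrArg Prod.snd hke; simp_all
      exact ⟨(h k).2 hk, rfl⟩
  rw [rowLen, he, Finset.card_image_of_injective _ (fun x y hxy => by simpa using hxy),
    Finset.card_range]

lemma ant_rowLen (I : FinIdeal (ℕ × ℕ)) : Ant (rowLen I) := by
  intro i
  by_contra h
  push_neg at h
  have h1 : (i+1, rowLen I i) ∈ I.1 := (mem_iff I (i+1) (rowLen I i)).2 h
  have h2 : (i, rowLen I i) ∈ I.1 := I.2 h1 (Prod.mk_le_mk.2 ⟨by omega, le_rfl⟩)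
  have h3 := (mem_iff I i (rowLen I i)).1 h2
  omega

lemma bnd_rowLen (I : FinIdeal (ℕ × ℕ)) : ∀ k, I.1.card ≤ k → rowLen I k = 0 := by
  classical
  intro k hk
  by_contra h
  have h0 : (k, 0) ∈ I.1 := (mem_iff I k 0).2 (by omega)
  have hsub : (Finset.range (k+1)).image (fun l => ((l, 0) : ℕ × ℕ)) ⊆ I.1 := by
    intro p hp
    simp only [Finset.mem_image, Finset.mem_range] at hp
    obtain ⟨l, hl, rfl⟩ := hp
    exact I.2 h0 (Prod.mk_le_mk.2 ⟨by omega, le_rfl⟩)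
  have hcard := Finset.card_le_card hsub
  rw [Finset.card_image_of_injective _ (fun x y hxy => by simpa using hxy),
    Finset.card_range] at hcard
  omega

lemma eq_of_rowLen {J K : FinIdeal (ℕ × ℕ)} (h : rowLen J = rowLen K) : J = K := by
  apply Subtype.ext
  apply Finset.ext
  rintro ⟨i, j⟩
  rw [mem_iff J i j, mem_iff K i j, h]

/-- maximal cells -/
def IsMaxCell (I : FinIdeal (ℕ × ℕ)) (c : ℕ × ℕ) : Prop :=
  c ∈ I.1 ∧ ∀ y ∈ I.1, c ≤ y → c = y

lemma erase_ideal (I : FinIdeal (ℕ × ℕ)) {c : ℕ × ℕ} (hc : IsMaxCell I c) :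
    ∀ ⦃x⦄, x ∈ I.1.erase c → ∀ ⦃y⦄, y ≤ x → y ∈ I.1.erase c := by
  intro x hx y hy
  rw [Finset.mem_erase] at hx ⊢
  refine ⟨?_, I.2 hx.2 hy⟩
  rintro rfl
  exact hx.1 (hc.2 x hx.2 hy).symm

lemma erase_covby (I : FinIdeal (ℕ × ℕ)) {c : ℕ × ℕ} (hc : IsMaxCell I c)
    (t : FinIdeal (ℕ × ℕ)) (ht : t.1 = I.1.erase c) : t ⋖ I := by
  constructor
  · have : t.1 < I.1 := by rw [ht]; exact Finset.erase_ssubset hc.1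
    exact this
  · intro w hw1 hw2
    have h1 : t.1 ⊂ w.1 := hw1
    have h2 : w.1 ⊂ I.1 := hw2
    obtain ⟨u, hu1, hu2⟩ := Finset.exists_of_ssubset h1
    have hucI : u ∈ I.1 := h2.1 hu1
    have huc : u = c := by
      by_contra hne
      exact hu2 (by rw [ht, Finset.mem_erase]; exact ⟨hne, hucI⟩)
    have hsub : I.1 ⊆ w.1 := by
      intro z hz
      by_cases hzc : z = c
      · rw [hzc, ← huc]; exact hu1
      · exact h1.1 (by rw [ht, Finset.mem_erase]; exact ⟨hzc, hz⟩)
    exact h2.2 hsub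

lemma covby_eq_erase (I : FinIdeal (ℕ × ℕ)) {t : FinIdeal (ℕ × ℕ)} (h : t ⋖ I) :
    ∃ c, IsMaxCell I c ∧ t.1 = I.1.erase c := by
  classical
  have hlt : t.1 ⊂ I.1 := h.1
  have hne : (I.1 \ t.1).Nonempty := by
    rw [Finset.sdiff_nonempty]
    exact fun hs => hlt.2 hs
  obtain ⟨c, hc, hmin⟩ : ∃ c ∈ I.1 \ t.1, ∀ x ∈ I.1 \ t.1, ¬ x < c := by
    obtain ⟨c, hc, hm⟩ := Finset.exists_minimal hne
    exact ⟨c, hc, fun x hx hxc => lt_irrefl x (lt_of_lt_of_le hxc (hm hx hxc.le))⟩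
  rw [Finset.mem_sdiff] at hc
  have hideal : ∀ ⦃x⦄, x ∈ insert c t.1 → ∀ ⦃y⦄, y ≤ x → y ∈ insert c t.1 := by
    intro x hx y hy
    rw [Finset.mem_insert] at hx ⊢
    rcases hx with hxc | hx
    · have hyc' : y ≤ c := hxc ▸ hy
      by_cases hyc : y = c
      · exact Or.inl hyc
      · right
        have hyI : y ∈ I.1 := I.2 hc.1 hyc'
        by_contra hyt
        exact hmin y (Finset.mem_sdiff.2 ⟨hyI, hyt⟩) (lt_of_le_of_ne hyc' hyc)
    · exact Or.inr (t.2 hx hy)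
  set s : FinIdeal (ℕ × ℕ) := ⟨insert c t.1, hideal⟩ with hs
  have hlts : t < s := by
    have : t.1 < s.1 := Finset.ssubset_insert hc.2
    exact this
  have hles : s ≤ I := by
    have : s.1 ⊆ I.1 := Finset.insert_subset hc.1 hlt.1
    exact this
  have heq : s = I := by
    by_contra hne2
    exact h.2 hlts (lt_of_le_of_ne hles hne2)
  have hIeq : I.1 = insert c t.1 := by rw [← heq]
  refine ⟨c, ⟨hc.1, ?_⟩, ?_⟩
  · intro y hy hcy
    by_contra hne3
    have hyt : y ∈ t.1 := by
      rw [hIeq, Finset.mem_insert] at hy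
      rcases hy with rfl | hy
      · exact absurd rfl hne3
      · exact hy
    exact hc.2 (t.2 hyt hcy)
  · rw [hIeq, Finset.erase_insert hc.2]

lemma ung_valid (I : FinIdeal (ℕ × ℕ)) {y : FinIdeal (ℕ × ℕ)} (hy : y ∈ ung I) :
    Valid (rowLen I) (rowLen y) := by
  classical
  obtain ⟨T, hT, hglb⟩ := hy
  set D := I.1.filter (fun c => ∃ t ∈ T, t.1 = I.1.erase c) with hD
  have hDmax : ∀ c ∈ D, IsMaxCell I c := by
    intro c hc
    rw [hD, Finset.mem_filter] at hc
    obtain ⟨hcI, t, ht, hte⟩ := hc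
    obtain ⟨c', hc', he'⟩ := covby_eq_erase I (hT t ht)
    have : c = c' := by
      by_contra hne
      have : c ∈ I.1.erase c' := Finset.mem_erase.2 ⟨hne, hcI⟩
      rw [← he', hte, Finset.mem_erase] at this
      exact this.1 rfl
    rw [this]; exact hc'
  have hzideal : ∀ ⦃x⦄, x ∈ I.1 \ D → ∀ ⦃z⦄, z ≤ x → z ∈ I.1 \ D := by
    intro x hx z hz
    rw [Finset.mem_sdiff] at hx ⊢
    refine ⟨I.2 hx.1 hz, ?_⟩
    intro hzD
    have heq : z = x := (hDmax z hzD).2 x hx.1 hz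
    exact hx.2 (heq ▸ hzD)
  set z : FinIdeal (ℕ × ℕ) := ⟨I.1 \ D, hzideal⟩ with hz
  have hglb2 : IsGLB (insert I T) z := by
    constructor
    · intro w hw
      rcases Set.mem_insert_iff.1 hw with rfl | hw
      · have : z.1 ⊆ w.1 := Finset.sdiff_subset
        exact this
      · obtain ⟨c, hc, he⟩ := covby_eq_erase I (hT w hw)
        have hcD : c ∈ D := by
          rw [hD, Finset.mem_filter]
          exact ⟨hc.1, w, hw, he⟩
        have : z.1 ⊆ w.1 := by
          rw [he]
          intro u hu
          rw [Finset.mem_sdiff] at hu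
          rw [Finset.mem_erase]
          refine ⟨?_, hu.1⟩
          rintro rfl
          exact hu.2 hcD
        exact this
    · intro b hb
      have hbI : b ≤ I := hb (Set.mem_insert _ _)
      have : b.1 ⊆ z.1 := by
        intro u hu
        rw [Finset.mem_sdiff]
        refine ⟨hbI hu, ?_⟩
        intro huD
        rw [hD, Finset.mem_filter] at huD
        obtain ⟨huI, t, ht, hte⟩ := huD
        have hbt : b ≤ t := hb (Set.mem_insert_iff.2 (Or.inr ht))
        have : u ∈ t.1 := hbt hu
        rw [hte, Finset.mem_erase] at this
        exact this.1 rfl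
      exact this
  have hyz : y = z := hglb.unique hglb2
  intro i
  set m := rowLen I i with hm
  have huniq : ∀ j, (i, j) ∈ D → j = m - 1 := by
    intro j hj
    have hjmax := hDmax _ hj
    have hjI := hjmax.1
    have hjm : j < m := (mem_iff I i j).1 hjI
    have hm1 : (i, m - 1) ∈ I.1 := (mem_iff I i (m-1)).2 (by omega)
    have := hjmax.2 _ hm1 (Prod.mk_le_mk.2 ⟨le_rfl, by omega⟩)
    have := congrArg Prod.snd this
    simpa using this
  by_cases hcor : (i, m - 1) ∈ D
  · right
    have hmax := hDmax _ hcor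
    have hm1 : 1 ≤ m := by
      have := (mem_iff I i (m-1)).1 hmax.1
      omega
    have hrowy : rowLen y i = m - 1 := by
      rw [hyz]
      apply rowLen_eq_of
      intro j
      show (i, j) ∈ I.1 \ D ↔ j < m - 1
      rw [Finset.mem_sdiff, mem_iff I i j]
      constructor
      · rintro ⟨hj, hjD⟩
        rcases Nat.lt_or_ge j (m-1) with h | h
        · exact h
        · exfalso
          have : j = m - 1 := by omega
          rw [this] at hjD
          exact hjD hcor
      · intro hj
        refine ⟨by omega, fun hD2 => ?_⟩
        have := huniq j hD2
        omega
    have hcornext : rowLen I (i+1) < m := by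
      by_contra hcon
      push_neg at hcon
      have hmem2 : (i+1, m-1) ∈ I.1 := (mem_iff I (i+1) (m-1)).2 (by omega)
      have := hmax.2 _ hmem2 (Prod.mk_le_mk.2 ⟨by omega, le_rfl⟩)
      have := congrArg Prod.fst this
      simp at this
    exact ⟨by omega, hcornext⟩
  · left
    rw [hyz]
    apply rowLen_eq_of
    intro j
    show (i, j) ∈ I.1 \ D ↔ j < m
    rw [Finset.mem_sdiff, mem_iff I i j]
    constructor
    · rintro ⟨hj, -⟩; exact hj
    · intro hj
      refine ⟨hj, fun hD2 => ?_⟩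
      have := huniq j hD2
      rw [this] at hD2
      exact hcor hD2

lemma corner_of (I : FinIdeal (ℕ × ℕ)) {i : ℕ} (h : rowLen I (i+1) < rowLen I i) :
    IsMaxCell I (i, rowLen I i - 1) := by
  have hm1 : 1 ≤ rowLen I i := by omega
  constructor
  · exact (mem_iff I i _).2 (by omega)
  · rintro ⟨a, b⟩ hab hle
    obtain ⟨h1, h2⟩ := Prod.mk_le_mk.1 hle
    have hblt : b < rowLen I a := (mem_iff I a b).1 hab
    have hIa : rowLen I a ≤ rowLen I i := ant_mono (ant_rowLen I) h1
    have hai : a = i := by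
      by_contra hne
      have : i + 1 ≤ a := by omega
      have := ant_mono (ant_rowLen I) this
      omega
    subst hai
    have : b = rowLen I a - 1 := by omega
    rw [this]

lemma move_mem_ung (I : FinIdeal (ℕ × ℕ)) {r' : ℕ → ℕ} (hv : Valid (rowLen I) r') :
    ∃ y : FinIdeal (ℕ × ℕ), y ∈ ung I ∧ rowLen y = r' := by
  classical
  have hult : ∀ i, r' i ≤ rowLen I i := valid_le hv
  have hant' : Ant r' := valid_ant (ant_rowLen I) hv
  have hidl : ∀ ⦃x⦄, x ∈ I.1.filter (fun p => p.2 < r' p.1) →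
      ∀ ⦃z⦄, z ≤ x → z ∈ I.1.filter (fun p => p.2 < r' p.1) := by
    rintro ⟨x1, x2⟩ hx ⟨z1, z2⟩ hz
    rw [Finset.mem_filter] at hx ⊢
    obtain ⟨hle1, hle2⟩ := Prod.mk_le_mk.1 hz
    refine ⟨I.2 hx.1 hz, ?_⟩
    have h1 : r' x1 ≤ r' z1 := ant_mono hant' hle1
    have h2 : x2 < r' x1 := hx.2
    simp only
    omega
  set y : FinIdeal (ℕ × ℕ) := ⟨I.1.filter (fun p => p.2 < r' p.1), hidl⟩ with hy
  have hymem : ∀ i j, ((i, j) ∈ y.1 ↔ j < r' i) := by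
    intro i j
    show (i, j) ∈ I.1.filter (fun p => p.2 < r' p.1) ↔ j < r' i
    rw [Finset.mem_filter, mem_iff I i j]
    constructor
    · rintro ⟨-, h2⟩; exact h2
    · intro h
      have := hult i
      exact ⟨by omega, h⟩
  have hyrow : rowLen y = r' := funext fun i => rowLen_eq_of (hymem i)
  set T : Set (FinIdeal (ℕ × ℕ)) :=
    {t | ∃ i, r' i < rowLen I i ∧ t.1 = I.1.erase (i, rowLen I i - 1)} with hT
  have hcorn : ∀ i, r' i < rowLen I i → IsMaxCell I (i, rowLen I i - 1) := by
    intro i hi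
    rcases hv i with h | ⟨h1, h2⟩
    · omega
    · exact corner_of I h2
  have hdecr : ∀ i, r' i < rowLen I i → r' i + 1 = rowLen I i := by
    intro i hi
    rcases hv i with h | ⟨h1, h2⟩
    · omega
    · exact h1
  refine ⟨y, ⟨T, ?_, ?_⟩, hyrow⟩
  · rintro t ⟨i, hi, hte⟩
    exact erase_covby I (hcorn i hi) t hte
  · constructor
    · intro w hw
      rcases Set.mem_insert_iff.1 hw with rfl | hw
      · have : y.1 ⊆ w.1 := Finset.filter_subset _ _
        exact this
      · obtain ⟨i, hi, hte⟩ := hw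
        have : y.1 ⊆ w.1 := by
          rw [hte]
          rintro ⟨a, b⟩ hu
          have hub : b < r' a := (hymem a b).1 hu
          rw [Finset.mem_erase]
          refine ⟨?_, ((mem_iff I a b).2 (by have := hult a; omega))⟩
          intro hcong
          obtain ⟨rfl, hb⟩ : a = i ∧ b = rowLen I i - 1 := by
            constructor
            · have := congrArg Prod.fst hcong; simpa using this
            · have := congrArg Prod.snd hcong; simpa using this
          have := hdecr a hi
          omega
        exact this
    · intro b hb
      have hbI : b ≤ I := hb (Set.mem_insert _ _)
      have : b.1 ⊆ y.1 := by
        rintro ⟨a, c2⟩ hu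
        have huI : (a, c2) ∈ I.1 := hbI hu
        have hc2 : c2 < rowLen I a := (mem_iff I a c2).1 huI
        rw [hymem a c2]
        rcases hv a with h | ⟨h1, h2⟩
        · omega
        · have hta : (⟨I.1.erase (a, rowLen I a - 1),
              erase_ideal I (hcorn a (by omega))⟩ : FinIdeal (ℕ × ℕ)) ∈ T := by
            exact ⟨a, by omega, rfl⟩
          have hbt := hb (Set.mem_insert_iff.2 (Or.inr hta))
          have : (a, c2) ∈ I.1.erase (a, rowLen I a - 1) := hbt hu
          rw [Finset.mem_erase] at this
          have hne := this.1
          have : c2 ≠ rowLen I a - 1 := by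
            intro hc
            exact hne (by rw [hc])
          omega
      exact this

end Bridge

/-- A partition `I` (a finite order ideal of `ℕ × ℕ`, so that Young's lattice is
`J(ℕ × ℕ)`) is an Eeta win in Young's lattice if and only if its boundary path `path(I)`
contains no odd-length maximal block of east steps immediately followed by an odd-length
maximal block of north steps.  Such a configuration corresponds exactly to a maximal run of
rows `i, …, j` of common length `rowLen I i = rowLen I j > rowLen I (j+1)` (maximality:
`i = 0` or `rowLen I (i-1) > rowLen I i`) whose north block has odd length `j - i + 1`
and whose preceding east block has odd length `rowLen I j - rowLen I (j+1)`. -/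
theorem eetaWin_young_iff (I : FinIdeal (ℕ × ℕ)) :
    eetaWin I ↔
      ¬ ∃ i j : ℕ, i ≤ j ∧ rowLen I i = rowLen I j ∧
        rowLen I (j + 1) < rowLen I j ∧
        (i = 0 ∨ rowLen I i < rowLen I (i - 1)) ∧
        Odd (j - i + 1) ∧ Odd (rowLen I j - rowLen I (j + 1)) := by
  classical
  have main : ∀ I : FinIdeal (ℕ × ℕ), eetaWin I ↔ ¬ UngarSeq.Bad (rowLen I) := by
    intro I
    refine (IsWellFounded.wf (r := ((· < ·) : FinIdeal (ℕ × ℕ) → FinIdeal (ℕ × ℕ) → Prop))).induction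
      (C := fun J => eetaWin J ↔ ¬ UngarSeq.Bad (rowLen J)) I ?_
    intro I IH
    constructor
    · intro he
      by_contra hbad
      obtain ⟨r', hval, hnb⟩ := (UngarSeq.exists_nobad I.1.card (rowLen I) (ant_rowLen I) (bnd_rowLen I)).1
      have hne : r' ≠ rowLen I := fun h => hnb (h ▸ hbad)
      obtain ⟨y, hyu, hyr⟩ := move_mem_ung I hval
      have hyne : y ≠ I := fun h => hne (by rw [← hyr, h])
      rw [eetaWin] at he
      have hat := he y ⟨hyu, hyne⟩
      rw [atnissWin] at hat
      obtain ⟨z, ⟨hzu, hzne⟩, hez⟩ := hat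
      have hzval : UngarSeq.Valid (rowLen y) (rowLen z) := ung_valid y hzu
      have hzrne : rowLen z ≠ rowLen y := fun h => hzne (eq_of_rowLen h)
      have hbz : UngarSeq.Bad (rowLen z) :=
        UngarSeq.all_moves_bad (ant_rowLen y) (bnd_rowLen y) (by rw [hyr]; exact hnb) hzval hzrne
      have hzy : z < y := lt_of_le_of_ne (ung_le hzu) hzne
      have hyI : y ≤ I := ung_le hyu
      have hzI : z < I := lt_of_lt_of_le hzy hyI
      exact (IH z hzI).1 hez hbz
    · intro hgood
      rw [eetaWin]
      rintro y ⟨hyu, hyne⟩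
      rw [atnissWin]
      have hyval : UngarSeq.Valid (rowLen I) (rowLen y) := ung_valid I hyu
      have hyrne : rowLen y ≠ rowLen I := fun h => hyne (eq_of_rowLen h)
      have hby : UngarSeq.Bad (rowLen y) :=
        UngarSeq.all_moves_bad (ant_rowLen I) (bnd_rowLen I) hgood hyval hyrne
      obtain ⟨r'', hval2, hnb2⟩ := (UngarSeq.exists_nobad y.1.card (rowLen y) (ant_rowLen y) (bnd_rowLen y)).1
      obtain ⟨z, hzu, hzr⟩ := move_mem_ung y hval2
      have hzne : z ≠ y := fun h => hnb2 (by rw [← hzr, h]; exact hby)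
      refine ⟨z, ⟨hzu, hzne⟩, ?_⟩
      have hzI : z < I := lt_of_le_of_lt (ung_le hzu) (lt_of_le_of_ne (ung_le hyu) hyne)
      exact (IH z hzI).2 (by rw [hzr]; exact hnb2)
  exact main I
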